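/- Let A be a supercommutative superalgebra over a field of characteristic ≠ 2, and let M be a maximal left ideal of A. Then M = M₀ + A₁ where M₀ = M ∩ A₀ is a maximal ideal of A₀; in particular M is a two-sided superideal. -/

import Mathlib

/-!
Odd elements of a supercommutative algebra square to zero (this is where `2 ≠ 0` enters), and
`x a x = ± a x x = 0` for `x` odd, so every left multiple `a x` of an odd element is nilpotent.
Hence `1 - a x` is a unit and `x` lies in every maximal left ideal `M`. Then `M` contains the
odd part of each of its elements, so it is graded; homogeneous elements supercommute with
everything, so the graded left ideal `M` is two-sided. Finally `A₀ ∩ M` is maximal in `A₀`: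
projecting a relation `m + c a = 1` to degree `0` gives one inside `A₀`.
-/

open DirectSum

theorem Ideal.mem_of_isMaximal_of_forall_isNilpotent_mul {R : Type*} [Ring R] {M : Ideal R}
    (hM : M.IsMaximal) {x : R} (hx : ∀ y, IsNilpotent (y * x)) : x ∈ M := by
  by_contra hxM
  obtain ⟨y, m, hm, hym⟩ := hM.exists_inv hxM
  have hm_eq : m = 1 - y * x := eq_sub_of_add_eq' hym
  exact hM.ne_top (M.eq_top_of_isUnit_mem hm (hm_eq ▸ (hx y).isUnit_one_sub))

theorem Ideal.IsMaximal.exists_mem_graded_zero_add_mul_eq_one {ι σ A : Type*}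
    [DecidableEq ι] [AddMonoid ι] [Ring A] [SetLike σ A] [AddSubmonoidClass σ A] {𝒜 : ι → σ}
    [GradedRing 𝒜]
    {M : Ideal A} (hM : M.IsMaximal) (hproj : ∀ r ∈ M, GradedRing.proj 𝒜 0 r ∈ M)
    {a : A} (ha : a ∈ 𝒜 0) (haM : a ∉ M) :
    ∃ m ∈ M, m ∈ 𝒜 0 ∧ ∃ b ∈ 𝒜 0, m + b * a = 1 := by
  obtain ⟨c, m, hm, hcm⟩ := hM.exists_inv haM
  refine ⟨GradedRing.proj 𝒜 0 m, hproj m hm, SetLike.coe_mem _, GradedRing.proj 𝒜 0 c,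
    SetLike.coe_mem _, ?_⟩
  have hproj_one : GradedRing.proj 𝒜 0 (1 : A) = 1 := by
    rw [GradedRing.proj_apply, decompose_of_mem_same 𝒜 SetLike.GradedOne.one_mem]
  have hproj_mul : GradedRing.proj 𝒜 0 (c * a) = GradedRing.proj 𝒜 0 c * a := by
    simp only [GradedRing.proj_apply, coe_decompose_mul_of_right_mem_zero 𝒜 ha]
  calc GradedRing.proj 𝒜 0 m + GradedRing.proj 𝒜 0 c * a
      = GradedRing.proj 𝒜 0 (c * a + m) := by rw [map_add, hproj_mul, add_comm]
    _ = 1 := by rw [hcm, hproj_one]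

section Superalgebra

variable {K A : Type*} [Field K] [Ring A] [Algebra K A]

def IsSupercommutative (𝒜 : ZMod 2 → Submodule K A) : Prop :=
  ∀ (i j : ZMod 2) (a b : A), a ∈ 𝒜 i → b ∈ 𝒜 j →
    a * b = ((-1 : K) ^ (i.val * j.val)) • (b * a)

theorem proj_zero_add_proj_one (𝒜 : ZMod 2 → Submodule K A) [GradedAlgebra 𝒜] (r : A) :
    GradedAlgebra.proj 𝒜 0 r + GradedAlgebra.proj 𝒜 1 r = r := by
  conv_rhs => rw [← (decompose 𝒜).symm_apply_apply r, ← sum_univ_of (decompose 𝒜 r),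
    decompose_symm_sum]
  simp only [decompose_symm_of, GradedAlgebra.proj_apply]
  exact (Fin.sum_univ_two fun i : ZMod 2 => (decompose 𝒜 r i : A)).symm

namespace IsSupercommutative

variable {𝒜 : ZMod 2 → Submodule K A}

theorem mul_self_eq_zero (h𝒜 : IsSupercommutative 𝒜) (hK : (2 : K) ≠ 0) {x : A}
    (hx : x ∈ 𝒜 1) : x * x = 0 := by
  have hanti : x * x = -(x * x) := by
    simpa [show (1 : ZMod 2).val * (1 : ZMod 2).val = 1 from rfl] using h𝒜 1 1 x x hx hx
  have htwo : (2 : K) • (x * x) = 0 := by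
    rw [two_smul]
    nth_rewrite 1 [hanti]
    exact neg_add_cancel _
  exact (smul_eq_zero.mp htwo).resolve_left hK

variable [GradedAlgebra 𝒜]

theorem mul_mul_self_eq_zero (h𝒜 : IsSupercommutative 𝒜) (hK : (2 : K) ≠ 0) {x : A}
    (hx : x ∈ 𝒜 1) (a : A) : x * a * x = 0 := by
  induction a using DirectSum.Decomposition.inductionOn 𝒜 with
  | zero => simp
  | homogeneous a =>
    rw [h𝒜 1 _ x a hx a.2, smul_mul_assoc, mul_assoc, h𝒜.mul_self_eq_zero hK hx, mul_zero,
      smul_zero]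
  | add a b ha hb => rw [mul_add, add_mul, ha, hb, add_zero]

theorem isNilpotent_mul (h𝒜 : IsSupercommutative 𝒜) (hK : (2 : K) ≠ 0) {x : A}
    (hx : x ∈ 𝒜 1) (a : A) : IsNilpotent (a * x) :=
  ⟨2, by rw [sq, mul_assoc, ← mul_assoc x, h𝒜.mul_mul_self_eq_zero hK hx, mul_zero]⟩

theorem mem_of_isMaximal (h𝒜 : IsSupercommutative 𝒜) (hK : (2 : K) ≠ 0) {M : Ideal A}
    (hM : M.IsMaximal) {x : A} (hx : x ∈ 𝒜 1) : x ∈ M :=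
  M.mem_of_isMaximal_of_forall_isNilpotent_mul hM (h𝒜.isNilpotent_mul hK hx)

theorem proj_zero_mem_of_isMaximal (h𝒜 : IsSupercommutative 𝒜) (hK : (2 : K) ≠ 0)
    {M : Ideal A} (hM : M.IsMaximal) {r : A} (hr : r ∈ M) : GradedAlgebra.proj 𝒜 0 r ∈ M := by
  rw [← add_sub_cancel_right (GradedAlgebra.proj 𝒜 0 r) (GradedAlgebra.proj 𝒜 1 r),
    proj_zero_add_proj_one]
  exact M.sub_mem hr (h𝒜.mem_of_isMaximal hK hM (SetLike.coe_mem _))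

theorem mul_mem_right_of_mem_graded (h𝒜 : IsSupercommutative 𝒜) {M : Ideal A} {i : ZMod 2}
    {m : A} (hm : m ∈ M) (hmi : m ∈ 𝒜 i) (r : A) : m * r ∈ M := by
  induction r using DirectSum.Decomposition.inductionOn 𝒜 with
  | zero => simp
  | homogeneous a =>
    rw [h𝒜 i _ m a hmi a.2]
    exact M.smul_of_tower_mem _ (M.mul_mem_left _ hm)
  | add a b ha hb => rw [mul_add]; exact M.add_mem ha hb

theorem mul_mem_right_of_isMaximal (h𝒜 : IsSupercommutative 𝒜) (hK : (2 : K) ≠ 0)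
    {M : Ideal A} (hM : M.IsMaximal) {x : A} (hx : x ∈ M) (r : A) : x * r ∈ M := by
  rw [← proj_zero_add_proj_one 𝒜 x, add_mul]
  exact M.add_mem
    (h𝒜.mul_mem_right_of_mem_graded (h𝒜.proj_zero_mem_of_isMaximal hK hM hx)
      (SetLike.coe_mem _) r)
    (h𝒜.mul_mem_right_of_mem_graded (h𝒜.mem_of_isMaximal hK hM (SetLike.coe_mem _))
      (SetLike.coe_mem _) r)

end IsSupercommutative

end Superalgebra

/-- a maximal left ideal M of a supercommutative superalgebra (char ≠ 2)
has the form M = M₀ + A₁ with M₀ = M ∩ A₀ a maximal ideal of A₀; in particular M is a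
two-sided superideal. -/
theorem maximal_left_ideal_of_superalgebra {K A : Type} [Field K] (hK : (2 : K) ≠ 0)
    [Ring A] [Algebra K A] (𝒜 : ZMod 2 → Submodule K A) [GradedAlgebra 𝒜]
    (hcomm : ∀ (i j : ZMod 2) (a b : A), a ∈ 𝒜 i → b ∈ 𝒜 j →
      a * b = ((-1 : K) ^ (i.val * j.val)) • (b * a))
    (M : Ideal A) (hM : M.IsMaximal) :
    (∀ x ∈ 𝒜 1, x ∈ M) ∧
    (∀ r ∈ M, GradedAlgebra.proj 𝒜 0 r ∈ M) ∧
    (∀ x ∈ M, ∀ r : A, x * r ∈ M) ∧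
    (∀ a : A, a ∈ 𝒜 0 → a ∉ M → ∃ m ∈ M, m ∈ 𝒜 0 ∧ ∃ b ∈ 𝒜 0, m + b * a = 1) := by
  have h𝒜 : IsSupercommutative 𝒜 := hcomm
  have hproj : ∀ r ∈ M, GradedAlgebra.proj 𝒜 0 r ∈ M :=
    fun _ hr => h𝒜.proj_zero_mem_of_isMaximal hK hM hr
  exact ⟨fun _ hx => h𝒜.mem_of_isMaximal hK hM hx, hproj,
    fun _ hx => h𝒜.mul_mem_right_of_isMaximal hK hM hx,
    fun _ ha haM => hM.exists_mem_graded_zero_add_mul_eq_one hproj ha haM⟩
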